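/- Let W[1..m] be a sequence of m ≥ 1 binary strings of length ℓ ≥ 1 and let T = SeqToString_ℓ(W). For every X ∈ {0,1}^{≤ℓ} and every i ∈ [1..PrefixRank(W,m,X)], it holds PrefixSelect(W,i,X) = ⌈ SA_T[α + i] / β ⌉, where α = RangeBeg(rev(X)·4, T) and β = ℓ + ⌊log₂ m⌋ + 2. -/

import Mathlib

/-- Strict lexicographic order on strings: `U ≺ V` iff `U` is a proper prefix of `V`,
or `U` and `V` first differ at a position where `U` has the smaller symbol. -/
def LexLt {α : Type*} [LT α] (U V : List α) : Prop := List.Lex (· < ·) U V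

/-- Non-strict lexicographic order on strings. -/
def LexLe {α : Type*} [LT α] (U V : List α) : Prop := LexLt U V ∨ U = V

/-- The suffix `T[j..|T|]` of `T` (1-based index `j`). -/
def Suf {α : Type*} (T : List α) (j : ℕ) : List α := T.drop (j - 1)

/-- `Occ P T` is the set of starting positions (1-based) of occurrences of `P` in `T`. -/
def Occ {α : Type*} (P T : List α) : Set ℕ :=
  { j | 1 ≤ j ∧ j + P.length ≤ T.length + 1 ∧ (Suf T j).take P.length = P }

/-- `RangeBeg P T` = number of suffixes of `T` lexicographically smaller than `P`. -/
noncomputable def RangeBeg {α : Type*} [LT α] (P T : List α) : ℕ :=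
  { j | 1 ≤ j ∧ j ≤ T.length ∧ LexLt (Suf T j) P }.ncard

/-- `RangeEnd P T = RangeBeg P T + |Occ P T|`. -/
noncomputable def RangeEnd {α : Type*} [LT α] (P T : List α) : ℕ :=
  RangeBeg P T + (Occ P T).ncard

/-- `LexRange P₁ P₂ T` = positions `j ∈ [1..|T|]` with `P₁ ⪯ T[j..|T|] ≺ P₂`. -/
def LexRange {α : Type*} [LT α] (P₁ P₂ T : List α) : Set ℕ :=
  { j | 1 ≤ j ∧ j ≤ T.length ∧ LexLe P₁ (Suf T j) ∧ LexLt (Suf T j) P₂ }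

/-- `sa` is the suffix array of `T` (1-based): a permutation of `[1..|T|]` listing the
starting positions of the suffixes of `T` in increasing lexicographic order. -/
def IsSuffixArray {α : Type*} [LT α] (T : List α) (sa : ℕ → ℕ) : Prop :=
  (∀ i, 1 ≤ i → i ≤ T.length → 1 ≤ sa i ∧ sa i ≤ T.length) ∧
  (∀ j, 1 ≤ j → j ≤ T.length → ∃ i, 1 ≤ i ∧ i ≤ T.length ∧ sa i = j) ∧
  (∀ i j, 1 ≤ i → i < j → j ≤ T.length → LexLt (Suf T (sa i)) (Suf T (sa j)))

/-- `binSym k x` : the length-`k` binary representation of `x` (MSB first, leading zeros). -/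
def binSym (k x : ℕ) : List ℕ := (List.range k).map fun i => x / 2 ^ (k - 1 - i) % 2

/-- `binStr k S` = `bin_k(S[1]) · bin_k(S[2]) · … · bin_k(S[|S|])`. -/
def binStr (k : ℕ) (S : List ℕ) : List ℕ := (S.map (binSym k)).flatten

/-- `ebinSym k x = 1^{k+1} · 0 · bin_k(x) · 0`. -/
def ebinSym (k x : ℕ) : List ℕ := List.replicate (k + 1) 1 ++ [0] ++ binSym k x ++ [0]

/-- `ebinStr k S` = concatenation of `ebin_k(S[i])` for `i = 1, …, |S|`. -/
def ebinStr (k : ℕ) (S : List ℕ) : List ℕ := (S.map (ebinSym k)).flatten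

/-- `sEnc k i` : length-`k` base-2 representation of `i` with `0 ↦ 2` and `1 ↦ 3`. -/
def sEnc (k i : ℕ) : List ℕ := (binSym k i).map (· + 2)

/-- `SeqToString m W = ⊙_{i=1}^{m} rev(W[i]) · 4 · s(i-1)` with `k = 1 + ⌊log₂ m⌋`. -/
def SeqToString (m : ℕ) (W : ℕ → List ℕ) : List ℕ :=
  ((List.range m).map
    fun i => (W (i + 1)).reverse ++ [4] ++ sEnc (1 + Nat.log 2 m) i).flatten

/-- `PermSeqToString m π W = ⊙_{i=1}^{m} rev(W[π[i]]) · 4 · s(π[i]-1)`. -/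
def PermSeqToString (m : ℕ) (perm : ℕ → ℕ) (W : ℕ → List ℕ) : List ℕ :=
  ((List.range m).map
    fun i => (W (perm (i + 1))).reverse ++ [4]
      ++ sEnc (1 + Nat.log 2 m) (perm (i + 1) - 1)).flatten

/-- `PrefixRank W j X = |{ i ∈ [1..j] : X is a prefix of W[i] }|`. -/
noncomputable def PrefixRank {α : Type*} (W : ℕ → List α) (j : ℕ) (X : List α) : ℕ :=
  { i | 1 ≤ i ∧ i ≤ j ∧ X <+: W i }.ncard

/-- `p` is the `r`-th smallest element of the set `A ⊆ ℕ`. -/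
def IsKthSmallest (A : Set ℕ) (r p : ℕ) : Prop :=
  p ∈ A ∧ (A ∩ Set.Iic p).ncard = r

/-- Ceiling division `⌈a / b⌉` of positive naturals. -/
def cdiv (a b : ℕ) : ℕ := (a + b - 1) / b

/-- Alphabet inversion: `inv_σ(S)[i] = σ - 1 - S[i]`. -/
def invStr (σ : ℕ) (S : List ℕ) : List ℕ := S.map fun a => σ - 1 - a

/-- `p` is a period of `S`: `1 ≤ p ≤ |S|` and `S[i] = S[i+p]` for all `i ∈ [1..|S|-p]`. -/
def IsPeriod {α : Type*} (S : List α) (p : ℕ) : Prop :=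
  1 ≤ p ∧ p ≤ S.length ∧ S.drop p <+: S

/-- `per S`: the smallest period of `S`. -/
noncomputable def per {α : Type*} (S : List α) : ℕ := sInf { p | IsPeriod S p }

/-- `P` is `τ`-periodic: `|P| ≥ 3τ - 1` and `per(P[1..3τ-1]) ≤ τ/3`. -/
noncomputable def TauPeriodic {α : Type*} (τ : ℕ) (P : List α) : Prop :=
  3 * τ ≤ P.length + 1 ∧ 3 * per (P.take (3 * τ - 1)) ≤ τ

/-- `R(τ,T) = { i ∈ [1..n-3τ+2] : per(T[i..i+3τ-2]) ≤ τ/3 }`. -/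
noncomputable def Rset {α : Type*} (τ : ℕ) (T : List α) : Set ℕ :=
  { i | 1 ≤ i ∧ i + 3 * τ ≤ T.length + 2 ∧ 3 * per ((Suf T i).take (3 * τ - 1)) ≤ τ }

/-- `S` is a `τ`-synchronizing set of `T` (consistency and density conditions). -/
noncomputable def IsSyncSet {α : Type*} (τ : ℕ) (T : List α) (S : Set ℕ) : Prop :=
  (∀ j ∈ S, 1 ≤ j ∧ j + 2 * τ ≤ T.length + 1) ∧
  (∀ i j, 1 ≤ i → i + 2 * τ ≤ T.length + 1 → 1 ≤ j → j + 2 * τ ≤ T.length + 1 →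
    (Suf T i).take (2 * τ) = (Suf T j).take (2 * τ) → (i ∈ S ↔ j ∈ S)) ∧
  (∀ i, 1 ≤ i → i + 3 * τ ≤ T.length + 2 → (S ∩ Set.Ico i (i + τ) = ∅ ↔ i ∈ Rset τ T))

/-- `succ_S(x) = min { x' ∈ S : x' ≥ x }`. -/
noncomputable def succS (S : Set ℕ) (x : ℕ) : ℕ := sInf (S ∩ Set.Ici x)

/-- `DistPrefixes(τ,T,S) = { T[j..succ_S(j)+2τ) : j ∈ [1..n-3τ+2] \ R(τ,T) }`. -/
noncomputable def DistPrefixes {α : Type*} (τ : ℕ) (T : List α) (S : Set ℕ) : Set (List α) :=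
  (fun j => (Suf T j).take (succS S j + 2 * τ - j)) ''
    { j | 1 ≤ j ∧ j + 3 * τ ≤ T.length + 2 ∧ j ∉ Rset τ T }

/-- `r` is the value of the prefix RMQ: the smallest index `i ∈ (b..e]` with `X` a prefix of
`W[i]` minimizing `A[i]` (ties broken towards the smaller index). -/
def IsPrefixRMQ (A : ℕ → ℤ) (W : ℕ → List ℕ) (b e : ℕ) (X : List ℕ) (r : ℕ) : Prop :=
  (b < r ∧ r ≤ e ∧ X <+: W r) ∧
  (∀ i, b < i → i ≤ e → X <+: W i → A r ≤ A i) ∧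
  (∀ i, b < i → i ≤ e → X <+: W i → A i = A r → r ≤ i)

/-! Each block `rev(W[j]) · 4 · s(j-1)` of `T` has length `β = ℓ + ⌊log₂ m⌋ + 2`, and since the
`W[j]` are binary and `s` only uses the symbols `2, 3`, the symbol `4` occurs in `T` exactly at the
offsets `≡ ℓ (mod β)`. Hence the occurrences of `P = rev(X) · 4` start exactly at the positions
`(j - 1) β + ℓ - |X| + 1` with `X` a prefix of `W[j]`, and, as the suffix there continues with
`s(j - 1)`, these suffixes are ordered by `j`. In the suffix array the suffixes having `P` as a
prefix come right after the `α = RangeBeg(P, T)` suffixes smaller than `P`, so `SA_T[α + i]` is the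
occurrence belonging to the `i`-th such `j`, which `⌈· / β⌉` recovers. -/

open Set

namespace List

variable {α : Type*}

theorem Lex.append_of_length_eq {r : α → α → Prop} {A B : List α} (h : Lex r A B)
    (hl : A.length = B.length) (C D : List α) : Lex r (A ++ C) (B ++ D) := by
  induction h with
  | nil => simp at hl
  | rel h => exact .rel h
  | cons _ ih => exact .cons (ih (by simpa using hl))

theorem Lex.lex_or_prefix_of_lex_append {r : α → α → Prop} {B P C : List α}
    (h : Lex r B (P ++ C)) : Lex r B P ∨ P <+: B := by
  induction P generalizing B with
  | nil => exact .inr nil_prefix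
  | cons a P ih =>
    cases h with
    | nil => exact .inl .nil
    | rel h => exact .inl (.rel h)
    | cons h => exact (ih h).imp .cons (fun ⟨t, ht⟩ => ⟨t, by simp [← ht]⟩)

theorem IsPrefix.of_le_of_le [LinearOrder α] {P A B : List α} (hPA : P <+: A) (hPB : P ≤ B)
    (hBA : B ≤ A) : P <+: B := by
  obtain ⟨C, rfl⟩ := hPA
  rcases hBA.lt_or_eq with h | rfl
  · exact (Lex.lex_or_prefix_of_lex_append h).resolve_left hPB.not_gt
  · exact prefix_append P C

theorem getElem?_append_cons_eq_some_self_iff {A B : List α} {a : α} (hA : a ∉ A) (hB : a ∉ B)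
    {r : ℕ} : (A ++ a :: B)[r]? = some a ↔ r = A.length := by
  refine ⟨fun h => ?_, fun h => by simp [h]⟩
  rcases lt_trichotomy r A.length with hr | hr | hr
  · rw [getElem?_append_left hr] at h
    exact absurd (mem_of_getElem? h) hA
  · exact hr
  · rw [getElem?_append_right hr.le, show r - A.length = (r - A.length - 1) + 1 by omega,
      getElem?_cons_succ] at h
    exact absurd (mem_of_getElem? h) hB

theorem exists_drop_flatten_eq {L : List (List α)} {β : ℕ} (hL : ∀ l ∈ L, l.length = β)
    {q t : ℕ} (hq : q < L.length) (ht : t ≤ β) :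
    ∃ rest, L.flatten.drop (q * β + t) = L[q].drop t ++ rest := by
  induction L generalizing q with
  | nil => simp at hq
  | cons l L ih =>
    have hl : l.length = β := hL l mem_cons_self
    cases q with
    | zero => exact ⟨L.flatten, by simp [drop_append_of_le_length (hl ▸ ht)]⟩
    | succ q =>
      obtain ⟨rest, h⟩ := ih (fun l' hl' => hL l' (mem_cons_of_mem l hl')) (by simpa using hq)
      refine ⟨rest, ?_⟩
      rw [flatten_cons, show (q + 1) * β + t = l.length + (q * β + t) by rw [hl]; ring,
        drop_length_add_append, h, getElem_cons_succ]

theorem drop_reverse_eq_reverse_iff_prefix {X w : List α} (h : X.length ≤ w.length) :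
    w.reverse.drop (w.length - X.length) = X.reverse ↔ X <+: w := by
  rw [drop_reverse, Nat.sub_sub_self h, reverse_inj, prefix_iff_eq_take, eq_comm]

end List

theorem Set.exists_ncard_inter_Iic_eq {J : Set ℕ} (hJ : J.Finite) {i : ℕ} (hi1 : 1 ≤ i)
    (hi : i ≤ J.ncard) : ∃ j ∈ J, (J ∩ Iic j).ncard = i := by
  set f : ℕ → ℕ := fun j => (J ∩ Iic j).ncard
  have hmono : StrictMonoOn f J := fun a _ b hb hab =>
    ncard_lt_ncard ⟨inter_subset_inter_right _ (Iic_subset_Iic.2 hab.le),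
      fun h => (h ⟨hb, mem_Iic.2 le_rfl⟩).2.not_gt hab⟩ (hJ.inter_of_left _)
  have hmaps : f '' J ⊆ Icc 1 J.ncard := by
    rintro _ ⟨j, hj, rfl⟩
    exact ⟨(ncard_pos (hJ.inter_of_left _)).2 ⟨j, hj, mem_Iic.2 le_rfl⟩,
      ncard_le_ncard inter_subset_left hJ⟩
  have himage : f '' J = Icc 1 J.ncard :=
    eq_of_subset_of_ncard_le hmaps (by rw [hmono.injOn.ncard_image, ncard_Icc_nat]; omega)
  exact (himage ▸ ⟨hi1, hi⟩ : i ∈ f '' J)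

section SuffixArray

variable {α : Type*} [LinearOrder α] {T : List α} {sa : ℕ → ℕ}

theorem IsSuffixArray.strictMonoOn (hsa : IsSuffixArray T sa) :
    StrictMonoOn (fun t => Suf T (sa t)) (Icc 1 T.length) :=
  fun s hs _ ht hst => hsa.2.2 s _ hs.1 hst ht.2

theorem IsSuffixArray.ncard_suf_le (hsa : IsSuffixArray T sa) {t : ℕ}
    (ht : t ∈ Icc 1 T.length) :
    {p | 1 ≤ p ∧ p ≤ T.length ∧ Suf T p ≤ Suf T (sa t)}.ncard = t := by
  have himage : {p | 1 ≤ p ∧ p ≤ T.length ∧ Suf T p ≤ Suf T (sa t)} = sa '' Icc 1 t := by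
    ext p
    constructor
    · rintro ⟨hp1, hpn, hle⟩
      obtain ⟨s, hs1, hsn, rfl⟩ := hsa.2.1 p hp1 hpn
      exact ⟨s, ⟨hs1, (hsa.strictMonoOn.le_iff_le ⟨hs1, hsn⟩ ht).1 hle⟩, rfl⟩
    · rintro ⟨s, ⟨hs1, hst⟩, rfl⟩
      have hs : s ∈ Icc 1 T.length := ⟨hs1, hst.trans ht.2⟩
      exact ⟨(hsa.1 s hs.1 hs.2).1, (hsa.1 s hs.1 hs.2).2,
        (hsa.strictMonoOn.le_iff_le hs ht).2 hst⟩
  have hinj : InjOn sa (Icc 1 t) :=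
    (hsa.strictMonoOn.injOn.of_comp (g := Suf T)).mono (Icc_subset_Icc_right ht.2)
  rw [himage, hinj.ncard_image, ncard_Icc_nat]
  omega

theorem ncard_suf_le_eq_rangeBeg_add {P : List α} {p : ℕ} (hp : P <+: Suf T p) :
    {q | 1 ≤ q ∧ q ≤ T.length ∧ Suf T q ≤ Suf T p}.ncard =
      RangeBeg P T + {q | 1 ≤ q ∧ q ≤ T.length ∧ P <+: Suf T q ∧ Suf T q ≤ Suf T p}.ncard := by
  have hfin : ∀ S : ℕ → Prop, {q | 1 ≤ q ∧ q ≤ T.length ∧ S q}.Finite := fun S =>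
    (finite_Icc 1 T.length).subset fun q hq => ⟨hq.1, hq.2.1⟩
  have hPp : P ≤ Suf T p := not_lt.1 hp.le
  rw [RangeBeg, ← ncard_union_eq _ (hfin _) (hfin _)]
  · congr 1
    ext q
    simp only [LexLt, List.lex_lt, mem_ofPred_eq, mem_union]
    constructor
    · rintro ⟨hq1, hqn, hle⟩
      by_cases hlt : Suf T q < P
      · exact .inl ⟨hq1, hqn, hlt⟩
      · exact .inr ⟨hq1, hqn, hp.of_le_of_le (not_lt.1 hlt) hle, hle⟩
    · rintro (⟨hq1, hqn, hlt⟩ | ⟨hq1, hqn, -, hle⟩)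
      exacts [⟨hq1, hqn, hlt.le.trans hPp⟩, ⟨hq1, hqn, hle⟩]
  · exact disjoint_left.2 fun q hlt hpre => hpre.2.2.1.le hlt.2.2

theorem IsSuffixArray.eq_rangeBeg_add (hsa : IsSuffixArray T sa) {P : List α} {t : ℕ}
    (ht : t ∈ Icc 1 T.length) (hP : P <+: Suf T (sa t)) :
    t = RangeBeg P T +
      {q | 1 ≤ q ∧ q ≤ T.length ∧ P <+: Suf T q ∧ Suf T q ≤ Suf T (sa t)}.ncard := by
  rw [← ncard_suf_le_eq_rangeBeg_add hP, hsa.ncard_suf_le ht]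

end SuffixArray

theorem binSym_succ (k x : ℕ) : binSym (k + 1) x = (x / 2 ^ k % 2) :: binSym k x := by
  simp only [binSym, List.range_succ_eq_map, List.map_cons, List.map_map, Function.comp_def]
  congr 1
  refine List.map_congr_left fun i hi => ?_
  rw [show k + 1 - 1 - i.succ = k - 1 - i by omega]

theorem binSym_lt_binSym_of_mod_lt {k x y : ℕ} (h : x % 2 ^ k < y % 2 ^ k) :
    binSym k x < binSym k y := by
  induction k generalizing x y with
  | zero => omega
  | succ k ih =>
    rw [binSym_succ, binSym_succ]
    rw [Nat.mod_pow_succ, Nat.mod_pow_succ] at h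
    have hx := Nat.mod_lt x (Nat.two_pow_pos k)
    have hy := Nat.mod_lt y (Nat.two_pow_pos k)
    rcases Nat.mod_two_eq_zero_or_one (x / 2 ^ k) with hbx | hbx <;>
      rcases Nat.mod_two_eq_zero_or_one (y / 2 ^ k) with hby | hby <;>
      rw [hbx, hby] at h ⊢
    · exact .cons (ih (by omega))
    · exact .rel (by norm_num)
    · omega
    · exact .cons (ih (by omega))

theorem sEnc_lt_sEnc {k x y : ℕ} (hxy : x < y) (hy : y < 2 ^ k) : sEnc k x < sEnc k y :=
  List.map_lt (fun _ _ h => Nat.add_lt_add_right h 2)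
    (binSym_lt_binSym_of_mod_lt (by rwa [Nat.mod_eq_of_lt (hxy.trans hy), Nat.mod_eq_of_lt hy]))

theorem length_sEnc (k x : ℕ) : (sEnc k x).length = k := by simp [sEnc, binSym]

theorem four_notMem_sEnc (k x : ℕ) : 4 ∉ sEnc k x := by
  simp only [sEnc, binSym, List.map_map, List.mem_map, List.mem_range, Function.comp_apply]
  rintro ⟨i, -, h⟩
  have := Nat.mod_lt (x / 2 ^ (k - 1 - i)) two_pos
  omega

section SeqToString

def seqBlock (m : ℕ) (W : ℕ → List ℕ) (q : ℕ) : List ℕ :=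
  (W (q + 1)).reverse ++ 4 :: sEnc (1 + Nat.log 2 m) q

theorem seqToString_eq_flatten (m : ℕ) (W : ℕ → List ℕ) :
    SeqToString m W = ((List.range m).map (seqBlock m W)).flatten := by
  rw [SeqToString]
  congr 1
  exact List.map_congr_left fun q _ => by simp [seqBlock]

variable {m ℓ : ℕ} {W : ℕ → List ℕ}

theorem length_seqBlock (hWlen : ∀ i, 1 ≤ i → i ≤ m → (W i).length = ℓ) {q : ℕ} (hq : q < m) :
    (seqBlock m W q).length = ℓ + Nat.log 2 m + 2 := by
  simp [seqBlock, length_sEnc, hWlen (q + 1) (by omega) (by omega)]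
  omega

theorem length_seqToString (hWlen : ∀ i, 1 ≤ i → i ≤ m → (W i).length = ℓ) :
    (SeqToString m W).length = m * (ℓ + Nat.log 2 m + 2) := by
  rw [seqToString_eq_flatten, List.length_flatten, List.map_map,
    List.map_congr_left (f := List.length ∘ seqBlock m W) (g := fun _ => ℓ + Nat.log 2 m + 2)
      fun q hq => length_seqBlock hWlen (List.mem_range.1 hq)]
  simp

theorem exists_drop_seqToString (hWlen : ∀ i, 1 ≤ i → i ≤ m → (W i).length = ℓ) {q t : ℕ}
    (hq : q < m) (ht : t ≤ ℓ + Nat.log 2 m + 2) :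
    ∃ rest, (SeqToString m W).drop (q * (ℓ + Nat.log 2 m + 2) + t) =
      (seqBlock m W q).drop t ++ rest := by
  obtain ⟨rest, h⟩ := List.exists_drop_flatten_eq (L := (List.range m).map (seqBlock m W))
    (by simpa using fun q hq => length_seqBlock hWlen hq) (by simpa using hq) ht
  exact ⟨rest, by rw [seqToString_eq_flatten, h, List.getElem_map, List.getElem_range]⟩

theorem getElem?_seqToString (hWlen : ∀ i, 1 ≤ i → i ≤ m → (W i).length = ℓ) {q r : ℕ}
    (hq : q < m) (hr : r < ℓ + Nat.log 2 m + 2) :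
    (SeqToString m W)[q * (ℓ + Nat.log 2 m + 2) + r]? = (seqBlock m W q)[r]? := by
  obtain ⟨rest, h⟩ := exists_drop_seqToString hWlen hq hr.le
  have h0 := congrArg (·[0]?) h
  simp only [List.getElem?_drop, Nat.add_zero] at h0
  rw [h0, List.getElem?_append_left (by rw [List.length_drop, length_seqBlock hWlen hq]; omega),
    List.getElem?_drop, Nat.add_zero]

theorem getElem?_seqToString_eq_four_iff (hWlen : ∀ i, 1 ≤ i → i ≤ m → (W i).length = ℓ)
    (hWbin : ∀ i, 1 ≤ i → i ≤ m → ∀ a ∈ W i, a < 2) {n : ℕ}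
    (hn : n < m * (ℓ + Nat.log 2 m + 2)) :
    (SeqToString m W)[n]? = some 4 ↔ n % (ℓ + Nat.log 2 m + 2) = ℓ := by
  set β := ℓ + Nat.log 2 m + 2
  have hq : n / β < m := Nat.div_lt_of_lt_mul (by rwa [mul_comm])
  have hW := hWlen (n / β + 1) (Nat.le_add_left 1 _) hq
  rw [← Nat.div_add_mod' n β, getElem?_seqToString hWlen hq (Nat.mod_lt n (by omega)), seqBlock,
    List.getElem?_append_cons_eq_some_self_iff
      (fun h => by simpa using hWbin _ (Nat.le_add_left 1 _) hq 4 (List.mem_reverse.1 h))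
      (four_notMem_sEnc _ _), List.length_reverse, hW, Nat.div_add_mod']

end SeqToString

section Occurrences

variable {m ℓ : ℕ} {W : ℕ → List ℕ} {X : List ℕ}

/-- The start of the occurrence of `rev X · 4` that ends at the separator of block `j`. -/
def occPos (m ℓ : ℕ) (X : List ℕ) (j : ℕ) : ℕ :=
  (j - 1) * (ℓ + Nat.log 2 m + 2) + (ℓ - X.length) + 1

theorem cdiv_occPos (hX : X.length ≤ ℓ) {j : ℕ} (hj : 1 ≤ j) :
    cdiv (occPos m ℓ X j) (ℓ + Nat.log 2 m + 2) = j := by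
  have hβ : (ℓ - X.length) < ℓ + Nat.log 2 m + 2 := by omega
  rw [cdiv, occPos, show (j - 1) * (ℓ + Nat.log 2 m + 2) + (ℓ - X.length) + 1 +
      (ℓ + Nat.log 2 m + 2) - 1 = (ℓ - X.length) + (ℓ + Nat.log 2 m + 2) * j by
    obtain ⟨j, rfl⟩ := Nat.exists_eq_add_of_le' hj; rw [Nat.add_sub_cancel]; ring_nf; omega,
    Nat.add_mul_div_left _ _ (by omega), Nat.div_eq_of_lt hβ, Nat.zero_add]

theorem suf_occPos (hWlen : ∀ i, 1 ≤ i → i ≤ m → (W i).length = ℓ) (hX : X.length ≤ ℓ)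
    {j : ℕ} (hj1 : 1 ≤ j) (hjm : j ≤ m) :
    ∃ rest, Suf (SeqToString m W) (occPos m ℓ X j) =
      (W j).reverse.drop (ℓ - X.length) ++ 4 :: (sEnc (1 + Nat.log 2 m) (j - 1) ++ rest) := by
  obtain ⟨rest, h⟩ := exists_drop_seqToString (W := W) hWlen (q := j - 1) (t := ℓ - X.length)
    (by omega) (by omega)
  refine ⟨rest, ?_⟩
  rw [Suf, occPos, Nat.add_sub_cancel, h, seqBlock, Nat.sub_add_cancel hj1,
    List.drop_append_of_le_length (by simp [hWlen j hj1 hjm])]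
  simp

theorem prefix_suf_occPos_iff (hWlen : ∀ i, 1 ≤ i → i ≤ m → (W i).length = ℓ)
    (hX : X.length ≤ ℓ) {j : ℕ} (hj1 : 1 ≤ j) (hjm : j ≤ m) :
    X.reverse ++ [4] <+: Suf (SeqToString m W) (occPos m ℓ X j) ↔ X <+: W j := by
  obtain ⟨rest, h⟩ := suf_occPos hWlen hX hj1 hjm
  have hW := hWlen j hj1 hjm
  rw [h, ← List.drop_reverse_eq_reverse_iff_prefix (X := X) (w := W j) (hW ▸ hX), hW]
  constructor
  · rintro ⟨u, hu⟩
    rw [List.append_assoc] at hu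
    exact (List.append_inj hu (by simp [hW]; omega)).1.symm
  · intro hD
    rw [hD]
    exact List.prefix_append_right_inj _ |>.2 (by simp)

theorem strictMonoOn_suf_occPos (hWlen : ∀ i, 1 ≤ i → i ≤ m → (W i).length = ℓ)
    (hX : X.length ≤ ℓ) :
    StrictMonoOn (fun j => Suf (SeqToString m W) (occPos m ℓ X j))
      {j | 1 ≤ j ∧ j ≤ m ∧ X <+: W j} := by
  have hsuf : ∀ j ∈ {j | 1 ≤ j ∧ j ≤ m ∧ X <+: W j}, ∃ rest,
      Suf (SeqToString m W) (occPos m ℓ X j) =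
        X.reverse ++ 4 :: (sEnc (1 + Nat.log 2 m) (j - 1) ++ rest) := by
    rintro j ⟨hj1, hjm, hXW⟩
    obtain ⟨rest, h⟩ := suf_occPos hWlen hX hj1 hjm
    have hW := hWlen j hj1 hjm
    have hrev := (List.drop_reverse_eq_reverse_iff_prefix (hW ▸ hX)).2 hXW
    rw [hW] at hrev
    exact ⟨rest, hrev ▸ h⟩
  intro a ha b hb hab
  obtain ⟨ra, hra⟩ := hsuf a ha
  obtain ⟨rb, hrb⟩ := hsuf b hb
  have hbm : b < 2 ^ (1 + Nat.log 2 m) :=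
    hb.2.1.trans_lt (add_comm 1 (Nat.log 2 m) ▸ Nat.lt_pow_succ_log_self one_lt_two m)
  simp only [hra, hrb]
  have hlt : sEnc (1 + Nat.log 2 m) (a - 1) < sEnc (1 + Nat.log 2 m) (b - 1) :=
    sEnc_lt_sEnc (by have := ha.1; omega) (by omega)
  exact List.append_left_lt <| .cons <| hlt.append_of_length_eq (by simp [length_sEnc]) ra rb

theorem setOf_prefix_suf_seqToString_eq_image (hWlen : ∀ i, 1 ≤ i → i ≤ m → (W i).length = ℓ)
    (hWbin : ∀ i, 1 ≤ i → i ≤ m → ∀ a ∈ W i, a < 2) (hX : X.length ≤ ℓ) :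
    {p | 1 ≤ p ∧ p ≤ (SeqToString m W).length ∧ X.reverse ++ [4] <+: Suf (SeqToString m W) p} =
      occPos m ℓ X '' {j | 1 ≤ j ∧ j ≤ m ∧ X <+: W j} := by
  ext p
  constructor
  · rintro ⟨hp1, hpn, hpre⟩
    set n := p - 1 + X.length
    have h4 : (SeqToString m W)[n]? = some 4 := by
      obtain ⟨u, hu⟩ := hpre
      rw [← List.getElem?_drop, ← Suf, ← hu]
      simp
    have hn : n < m * (ℓ + Nat.log 2 m + 2) :=
      length_seqToString hWlen ▸ (List.getElem?_eq_some_iff.1 h4).1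
    have hmod := (getElem?_seqToString_eq_four_iff hWlen hWbin hn).1 h4
    have hq : n / (ℓ + Nat.log 2 m + 2) < m := Nat.div_lt_of_lt_mul (by rwa [mul_comm])
    have hdiv := Nat.div_add_mod' n (ℓ + Nat.log 2 m + 2)
    have hp : occPos m ℓ X (n / (ℓ + Nat.log 2 m + 2) + 1) = p := by
      rw [occPos, Nat.add_sub_cancel]
      omega
    refine ⟨_, ⟨Nat.le_add_left 1 _, hq, ?_⟩, hp⟩
    exact (prefix_suf_occPos_iff hWlen hX (Nat.le_add_left 1 _) hq).1 (hp ▸ hpre)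
  · rintro ⟨j, ⟨hj1, hjm, hXW⟩, rfl⟩
    have hpre := (prefix_suf_occPos_iff hWlen hX hj1 hjm).2 hXW
    refine ⟨by simp [occPos], ?_, hpre⟩
    have hlen := hpre.length_le
    simp only [Suf, List.length_drop, List.length_append, List.length_singleton] at hlen
    omega

theorem ncard_setOf_prefix_suf_le_occPos (hWlen : ∀ i, 1 ≤ i → i ≤ m → (W i).length = ℓ)
    (hWbin : ∀ i, 1 ≤ i → i ≤ m → ∀ a ∈ W i, a < 2) (hX : X.length ≤ ℓ) {j : ℕ}
    (hj : j ∈ {j | 1 ≤ j ∧ j ≤ m ∧ X <+: W j}) :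
    {p | 1 ≤ p ∧ p ≤ (SeqToString m W).length ∧ X.reverse ++ [4] <+: Suf (SeqToString m W) p ∧
        Suf (SeqToString m W) p ≤ Suf (SeqToString m W) (occPos m ℓ X j)}.ncard =
      ({j | 1 ≤ j ∧ j ≤ m ∧ X <+: W j} ∩ Iic j).ncard := by
  have hocc := setOf_prefix_suf_seqToString_eq_image hWlen hWbin hX
  have hmono := strictMonoOn_suf_occPos hWlen hX
  have hinj : InjOn (occPos m ℓ X) ({j | 1 ≤ j ∧ j ≤ m ∧ X <+: W j} ∩ Iic j) :=
    (hmono.injOn.of_comp (g := Suf (SeqToString m W))).mono inter_subset_left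
  rw [← hinj.ncard_image]
  congr 1
  ext p
  constructor
  · rintro ⟨hp1, hpn, hpre, hle⟩
    obtain ⟨j', hj', rfl⟩ : p ∈ occPos m ℓ X '' _ := by
      rw [← hocc]
      exact ⟨hp1, hpn, hpre⟩
    exact ⟨j', ⟨hj', (hmono.le_iff_le hj' hj).1 hle⟩, rfl⟩
  · rintro ⟨j', ⟨hj', hle⟩, rfl⟩
    have hmem := mem_image_of_mem (occPos m ℓ X) hj'
    rw [← hocc] at hmem
    obtain ⟨hp1, hpn, hpre⟩ := hmem
    exact ⟨hp1, hpn, hpre, (hmono.le_iff_le hj' hj).2 hle⟩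

end Occurrences

theorem stmt4_general (m ℓ : ℕ) (W : ℕ → List ℕ)
    (hWlen : ∀ i, 1 ≤ i → i ≤ m → (W i).length = ℓ)
    (hWbin : ∀ i, 1 ≤ i → i ≤ m → ∀ a ∈ W i, a < 2)
    (sa : ℕ → ℕ) (hsa : IsSuffixArray (SeqToString m W) sa)
    (X : List ℕ) (hXlen : X.length ≤ ℓ)
    (i : ℕ) (hi1 : 1 ≤ i) (hi2 : i ≤ PrefixRank W m X) :
    IsKthSmallest { j | 1 ≤ j ∧ j ≤ m ∧ X <+: W j } i
      (cdiv (sa (RangeBeg (X.reverse ++ [4]) (SeqToString m W) + i))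
        (ℓ + Nat.log 2 m + 2)) := by
  set J := {j | 1 ≤ j ∧ j ≤ m ∧ X <+: W j}
  have hJfin : J.Finite := (finite_Icc 1 m).subset fun j hj => ⟨hj.1, hj.2.1⟩
  obtain ⟨j, hj, hji⟩ := exists_ncard_inter_Iic_eq hJfin hi1 hi2
  have hocc := mem_image_of_mem (occPos m ℓ X) hj
  rw [← setOf_prefix_suf_seqToString_eq_image hWlen hWbin hXlen] at hocc
  obtain ⟨hp1, hpn, hpre⟩ := hocc
  obtain ⟨t, ht1, htn, hsat⟩ := hsa.2.1 _ hp1 hpn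
  have hrank := hsa.eq_rangeBeg_add ⟨ht1, htn⟩ (hsat ▸ hpre)
  rw [hsat, ncard_setOf_prefix_suf_le_occPos hWlen hWbin hXlen hj, hji] at hrank
  rw [← hrank, hsat, cdiv_occPos hXlen hj.1]
  exact ⟨hj, hji⟩

theorem stmt4 (m ℓ : ℕ) (hm : 1 ≤ m) (hℓ : 1 ≤ ℓ) (W : ℕ → List ℕ)
    (hWlen : ∀ i, 1 ≤ i → i ≤ m → (W i).length = ℓ)
    (hWbin : ∀ i, 1 ≤ i → i ≤ m → ∀ a ∈ W i, a < 2)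
    (sa : ℕ → ℕ) (hsa : IsSuffixArray (SeqToString m W) sa)
    (X : List ℕ) (hXlen : X.length ≤ ℓ) (hXbin : ∀ a ∈ X, a < 2)
    (i : ℕ) (hi1 : 1 ≤ i) (hi2 : i ≤ PrefixRank W m X) :
    IsKthSmallest { j | 1 ≤ j ∧ j ≤ m ∧ X <+: W j } i
      (cdiv (sa (RangeBeg (X.reverse ++ [4]) (SeqToString m W) + i))
        (ℓ + Nat.log 2 m + 2)) :=
  stmt4_general m ℓ W hWlen hWbin sa hsa X hXlen i hi1 hi2
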